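/- Let R be an m × n rectangle in ℤ² and A a p-random subset. The probability that R is crossed from left to right (no vertical double gap and the rightmost column contains a site of A) is at most e^{−m·g(n·q)}, where q = −log(1−p) and g(z) = −log(β(1−e^{−z})), β(u) = (u+√(u(4−3u)))/2. -/

import Mathlib

noncomputable def betaFn (u : ℝ) : ℝ := (u + Real.sqrt (u * (4 - 3 * u))) / 2

noncomputable def gFn (z : ℝ) : ℝ := - Real.log (betaFn (1 - Real.exp (-z)))

open scoped Classical in
/-- The probability of the event `E` under the `p`-random (product Bernoulli)
measure on subsets of the finite set `V`. -/
noncomputable def probEvent {ι : Type*} [DecidableEq ι] (V : Finset ι) (p : ℝ)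
    (E : Finset ι → Prop) : ℝ :=
  ∑ A ∈ V.powerset, if E A then p ^ A.card * (1 - p) ^ (V.card - A.card) else 0

/-- The rectangle `[1,m] × [1,n]` as a finite set of sites. -/
noncomputable def rectFin (m n : ℕ) : Finset (ℤ × ℤ) := Finset.Icc 1 (m : ℤ) ×ˢ Finset.Icc 1 (n : ℤ)

/-- `A` has no vertical double gap in the `m × n` rectangle. -/
def NoVerticalDoubleGap (m n : ℕ) (A : Finset (ℤ × ℤ)) : Prop :=
  ∀ j : ℤ, 1 ≤ j → j ≤ (m : ℤ) - 1 →
    ∃ v ∈ A, (v.1 = j ∨ v.1 = j + 1) ∧ 1 ≤ v.2 ∧ v.2 ≤ (n : ℤ)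

/-- The `m × n` rectangle is crossed from left to right by `A`: no vertical
double gap, and the rightmost column is occupied. -/
def CrossedLeftRight (m n : ℕ) (A : Finset (ℤ × ℤ)) : Prop :=
  NoVerticalDoubleGap m n A ∧ ∃ v ∈ A, v.1 = (m : ℤ) ∧ 1 ≤ v.2 ∧ v.2 ≤ (n : ℤ)

/-! Let `u = 1 - (1 - p) ^ n` be the probability that a column contains a site of `A`, and let
`H k` and `F k` be the probabilities that the first `k` columns have no vertical double gap,
resp. are crossed. Columns are independent, so `F (k + 1) = u * H k`, and splitting on whether
the last column is occupied gives `H (k + 2) = F (k + 2) + (1 - u) * F (k + 1)`. Hence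
`F (k + 3) = u * F (k + 2) + u * (1 - u) * F (k + 1)` with `F 1 = F 2 = u`. Since
`β = betaFn u` is the positive root of `x ^ 2 = u * x + u * (1 - u)` and `u ≤ β`, `u ≤ β ^ 2`,
induction gives `F m ≤ β ^ m`, and `β ^ m = exp (-m * g (n * q))` because `exp (-q) = 1 - p`. -/

open Finset
open scoped Classical

section ProbEvent

variable {ι : Type*} [DecidableEq ι]

noncomputable def bernoulliWeight (V : Finset ι) (p : ℝ) (A : Finset ι) : ℝ :=
  p ^ #A * (1 - p) ^ (#V - #A)

theorem probEvent_eq_sum_bernoulliWeight (V : Finset ι) (p : ℝ) (E : Finset ι → Prop) :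
    probEvent V p E = ∑ A ∈ V.powerset, if E A then bernoulliWeight V p A else 0 :=
  rfl

theorem sum_bernoulliWeight (V : Finset ι) (p : ℝ) :
    ∑ A ∈ V.powerset, bernoulliWeight V p A = 1 := by
  have h := prod_add (fun _ : ι => p) (fun _ : ι => 1 - p) V
  simp only [add_sub_cancel, prod_const_one, prod_const] at h
  rw [h]
  refine sum_congr rfl fun A hA => ?_
  rw [bernoulliWeight, card_sdiff_of_subset (mem_powerset.1 hA)]

theorem bernoulliWeight_union {V₁ V₂ A₁ A₂ : Finset ι} (hV : Disjoint V₁ V₂) (h₁ : A₁ ⊆ V₁)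
    (h₂ : A₂ ⊆ V₂) (p : ℝ) :
    bernoulliWeight (V₁ ∪ V₂) p (A₁ ∪ A₂) = bernoulliWeight V₁ p A₁ * bernoulliWeight V₂ p A₂ := by
  have hA : Disjoint A₁ A₂ := hV.mono h₁ h₂
  have hsub : #V₁ + #V₂ - (#A₁ + #A₂) = (#V₁ - #A₁) + (#V₂ - #A₂) := by
    have := card_le_card h₁
    have := card_le_card h₂
    omega
  rw [bernoulliWeight, bernoulliWeight, bernoulliWeight, card_union_of_disjoint hV,
    card_union_of_disjoint hA, hsub, pow_add, pow_add]
  ring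

theorem sum_powerset_union {M : Type*} [AddCommMonoid M] {V₁ V₂ : Finset ι}
    (hV : Disjoint V₁ V₂) (f : Finset ι → M) :
    ∑ A ∈ (V₁ ∪ V₂).powerset, f A = ∑ A₁ ∈ V₁.powerset, ∑ A₂ ∈ V₂.powerset, f (A₁ ∪ A₂) := by
  rw [← sum_product']
  refine sum_nbij' (fun A => (A ∩ V₁, A ∩ V₂)) (fun B => B.1 ∪ B.2) ?_ ?_ ?_ ?_ ?_
  · intro A _
    simp [inter_subset_right]
  · intro B hB
    simp only [mem_product, mem_powerset] at hB ⊢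
    exact union_subset_union hB.1 hB.2
  · intro A hA
    simp only [mem_powerset] at hA
    rw [← inter_union_distrib_left, inter_eq_left.2 hA]
  · intro B hB
    simp only [mem_product, mem_powerset] at hB
    rw [union_inter_distrib_right, union_inter_distrib_right, inter_eq_left.2 hB.1,
      inter_eq_left.2 hB.2, disjoint_iff_inter_eq_empty.1 (hV.symm.mono_left hB.2),
      disjoint_iff_inter_eq_empty.1 (hV.mono_left hB.1), union_empty, empty_union]
  · intro A hA
    simp only [mem_powerset] at hA
    rw [← inter_union_distrib_left, inter_eq_left.2 hA]

theorem probEvent_union {V₁ V₂ : Finset ι} (hV : Disjoint V₁ V₂) (p : ℝ)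
    {E E₁ E₂ : Finset ι → Prop}
    (hE : ∀ A₁ ⊆ V₁, ∀ A₂ ⊆ V₂, E (A₁ ∪ A₂) ↔ E₁ A₁ ∧ E₂ A₂) :
    probEvent (V₁ ∪ V₂) p E = probEvent V₁ p E₁ * probEvent V₂ p E₂ := by
  rw [probEvent_eq_sum_bernoulliWeight, sum_powerset_union hV, probEvent_eq_sum_bernoulliWeight,
    probEvent_eq_sum_bernoulliWeight, sum_mul_sum]
  refine sum_congr rfl fun A₁ hA₁ => sum_congr rfl fun A₂ hA₂ => ?_
  rw [mem_powerset] at hA₁ hA₂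
  rw [ite_zero_mul_ite_zero, bernoulliWeight_union hV hA₁ hA₂]
  exact if_congr (hE A₁ hA₁ A₂ hA₂) rfl rfl

theorem probEvent_of_forall {V : Finset ι} (p : ℝ) {E : Finset ι → Prop} (h : ∀ A ⊆ V, E A) :
    probEvent V p E = 1 := by
  rw [probEvent_eq_sum_bernoulliWeight, ← sum_bernoulliWeight V p]
  exact sum_congr rfl fun A hA => if_pos (h A (mem_powerset.1 hA))

theorem probEvent_and_add_probEvent_and_not (V : Finset ι) (p : ℝ) (E F : Finset ι → Prop) :
    probEvent V p (fun A => E A ∧ F A) + probEvent V p (fun A => E A ∧ ¬F A) =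
      probEvent V p E := by
  rw [probEvent, probEvent, probEvent, ← sum_add_distrib]
  refine sum_congr rfl fun A _ => ?_
  by_cases hE : E A <;> by_cases hF : F A <;> simp [hE, hF]

theorem probEvent_not_nonempty (V : Finset ι) (p : ℝ) :
    probEvent V p (fun A => ¬A.Nonempty) = (1 - p) ^ #V := by
  simp only [probEvent, not_nonempty_iff_eq_empty, sum_ite_eq', empty_mem_powerset, if_true,
    card_empty, pow_zero, one_mul, Nat.sub_zero]

theorem probEvent_nonempty (V : Finset ι) (p : ℝ) :
    probEvent V p Finset.Nonempty = 1 - (1 - p) ^ #V := by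
  have h := probEvent_and_add_probEvent_and_not V p (fun _ => True) Finset.Nonempty
  simp only [true_and, probEvent_not_nonempty] at h
  rw [probEvent_of_forall p fun _ _ => trivial] at h
  linarith

end ProbEvent

section Rectangle

noncomputable def column (n : ℕ) (c : ℤ) : Finset (ℤ × ℤ) := {c} ×ˢ Icc 1 (n : ℤ)

def ColumnOccupied (n : ℕ) (A : Finset (ℤ × ℤ)) (c : ℤ) : Prop :=
  ∃ v ∈ A, v.1 = c ∧ 1 ≤ v.2 ∧ v.2 ≤ (n : ℤ)

theorem card_column (n : ℕ) (c : ℤ) : #(column n c) = n := by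
  simp [column]

theorem mem_column {n : ℕ} {c : ℤ} {v : ℤ × ℤ} :
    v ∈ column n c ↔ v.1 = c ∧ 1 ≤ v.2 ∧ v.2 ≤ (n : ℤ) := by
  simp only [column, mem_product, mem_singleton, mem_Icc]

theorem mem_rectFin {k n : ℕ} {v : ℤ × ℤ} :
    v ∈ rectFin k n ↔ 1 ≤ v.1 ∧ v.1 ≤ (k : ℤ) ∧ 1 ≤ v.2 ∧ v.2 ≤ (n : ℤ) := by
  simp only [rectFin, mem_product, mem_Icc, and_assoc]

theorem rectFin_succ (k n : ℕ) : rectFin (k + 1) n = rectFin k n ∪ column n (k + 1) := by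
  ext ⟨a, b⟩
  simp only [rectFin, column, mem_union, mem_product, mem_Icc, mem_singleton]
  push_cast
  omega

theorem disjoint_rectFin_column {k n : ℕ} {c : ℤ} (hc : (k : ℤ) < c) :
    Disjoint (rectFin k n) (column n c) := by
  rw [disjoint_left]
  intro v h₁ h₂
  have := (mem_rectFin.1 h₁).2.1
  have := (mem_column.1 h₂).1
  omega

theorem noVerticalDoubleGap_iff {m n : ℕ} {A : Finset (ℤ × ℤ)} :
    NoVerticalDoubleGap m n A ↔ ∀ j : ℤ, 1 ≤ j → j ≤ (m : ℤ) - 1 →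
      ColumnOccupied n A j ∨ ColumnOccupied n A (j + 1) := by
  simp only [NoVerticalDoubleGap, ColumnOccupied, or_and_right, and_or_left, exists_or]

theorem noVerticalDoubleGap_succ_iff {k n : ℕ} {A : Finset (ℤ × ℤ)} :
    NoVerticalDoubleGap (k + 1) n A ↔ NoVerticalDoubleGap k n A ∧
      (1 ≤ k → ColumnOccupied n A k ∨ ColumnOccupied n A (k + 1)) := by
  simp only [noVerticalDoubleGap_iff]
  push_cast
  constructor
  · intro h
    exact ⟨fun j hj₁ hj₂ => h j hj₁ (by omega), fun hk => h k (by omega) (by omega)⟩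
  · rintro ⟨h, hk⟩ j hj₁ hj₂
    rcases lt_or_eq_of_le hj₂ with hj | rfl
    · exact h j hj₁ (by omega)
    · simpa using hk (by omega)

theorem columnOccupied_union_of_ne {n : ℕ} {A₁ A₂ : Finset (ℤ × ℤ)} {c j : ℤ}
    (hA₂ : A₂ ⊆ column n c) (hj : j ≠ c) :
    ColumnOccupied n (A₁ ∪ A₂) j ↔ ColumnOccupied n A₁ j := by
  refine ⟨fun ⟨v, hv, hvj⟩ => ⟨v, ?_, hvj⟩, fun ⟨v, hv, hvj⟩ => ⟨v, mem_union_left _ hv, hvj⟩⟩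
  refine (mem_union.1 hv).resolve_right fun hv₂ => hj ?_
  rw [← hvj.1, (mem_column.1 (hA₂ hv₂)).1]

theorem columnOccupied_union_self {k n : ℕ} {A₁ A₂ : Finset (ℤ × ℤ)} {c : ℤ}
    (hA₁ : A₁ ⊆ rectFin k n) (hA₂ : A₂ ⊆ column n c) (hc : (k : ℤ) < c) :
    ColumnOccupied n (A₁ ∪ A₂) c ↔ A₂.Nonempty := by
  constructor
  · rintro ⟨v, hv, hvc, -⟩
    refine ⟨v, (mem_union.1 hv).resolve_left fun hv₁ => ?_⟩
    have := (mem_rectFin.1 (hA₁ hv₁)).2.1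
    omega
  · rintro ⟨v, hv⟩
    exact ⟨v, mem_union_right _ hv, mem_column.1 (hA₂ hv)⟩

theorem noVerticalDoubleGap_union_column {k n : ℕ} {A₁ A₂ : Finset (ℤ × ℤ)} {c : ℤ}
    (hA₂ : A₂ ⊆ column n c) (hc : (k : ℤ) < c) :
    NoVerticalDoubleGap k n (A₁ ∪ A₂) ↔ NoVerticalDoubleGap k n A₁ := by
  simp only [noVerticalDoubleGap_iff]
  refine forall₂_congr fun j _ => forall_congr' fun hj => ?_
  rw [columnOccupied_union_of_ne hA₂ (by omega), columnOccupied_union_of_ne hA₂ (by omega)]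

theorem crossedLeftRight_union_iff {k n : ℕ} {A₁ A₂ : Finset (ℤ × ℤ)}
    (hA₁ : A₁ ⊆ rectFin k n) (hA₂ : A₂ ⊆ column n (k + 1)) :
    CrossedLeftRight (k + 1) n (A₁ ∪ A₂) ↔ NoVerticalDoubleGap k n A₁ ∧ A₂.Nonempty := by
  have hc : (k : ℤ) < k + 1 := lt_add_one _
  change NoVerticalDoubleGap (k + 1) n _ ∧ ColumnOccupied n _ ((k + 1 : ℕ) : ℤ) ↔ _
  rw [noVerticalDoubleGap_succ_iff, noVerticalDoubleGap_union_column hA₂ hc, Nat.cast_succ,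
    columnOccupied_union_self hA₁ hA₂ hc]
  tauto

theorem noVerticalDoubleGap_and_not_columnOccupied_union_iff {k n : ℕ} {A₁ A₂ : Finset (ℤ × ℤ)}
    (hA₁ : A₁ ⊆ rectFin (k + 1) n) (hA₂ : A₂ ⊆ column n (k + 2)) :
    NoVerticalDoubleGap (k + 2) n (A₁ ∪ A₂) ∧ ¬ColumnOccupied n (A₁ ∪ A₂) (k + 2) ↔
      CrossedLeftRight (k + 1) n A₁ ∧ ¬A₂.Nonempty := by
  have hc : ((k + 1 : ℕ) : ℤ) < k + 2 := by push_cast; omega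
  change _ ↔ (NoVerticalDoubleGap (k + 1) n A₁ ∧ ColumnOccupied n A₁ ((k + 1 : ℕ) : ℤ)) ∧ _
  rw [show k + 2 = k + 1 + 1 from rfl, noVerticalDoubleGap_succ_iff,
    noVerticalDoubleGap_union_column hA₂ hc, columnOccupied_union_self hA₁ hA₂ hc,
    columnOccupied_union_of_ne hA₂ hc.ne,
    show ((k + 1 : ℕ) : ℤ) + 1 = k + 2 by push_cast; ring, columnOccupied_union_self hA₁ hA₂ hc]
  have hk : 1 ≤ k + 1 := by omega
  tauto

end Rectangle

section Recursion

variable (n : ℕ) (p : ℝ)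

theorem probEvent_crossedLeftRight_succ (k : ℕ) :
    probEvent (rectFin (k + 1) n) p (CrossedLeftRight (k + 1) n) =
      (1 - (1 - p) ^ n) * probEvent (rectFin k n) p (NoVerticalDoubleGap k n) := by
  rw [rectFin_succ, probEvent_union (disjoint_rectFin_column (lt_add_one _)) p
    fun A₁ hA₁ A₂ hA₂ => crossedLeftRight_union_iff hA₁ hA₂, probEvent_nonempty, card_column,
    mul_comm]

theorem probEvent_noVerticalDoubleGap_of_le_one {k : ℕ} (hk : k ≤ 1) :
    probEvent (rectFin k n) p (NoVerticalDoubleGap k n) = 1 :=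
  probEvent_of_forall p fun _ _ j hj₁ hj₂ => by omega

theorem probEvent_noVerticalDoubleGap_add_two (k : ℕ) :
    probEvent (rectFin (k + 2) n) p (NoVerticalDoubleGap (k + 2) n) =
      probEvent (rectFin (k + 2) n) p (CrossedLeftRight (k + 2) n) +
        (1 - p) ^ n * probEvent (rectFin (k + 1) n) p (CrossedLeftRight (k + 1) n) := by
  rw [← probEvent_and_add_probEvent_and_not _ p _ fun A => ColumnOccupied n A (k + 2)]
  congr 1
  rw [show rectFin (k + 2) n = rectFin (k + 1) n ∪ column n (k + 2) by
      rw [rectFin_succ]; push_cast; ring_nf,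
    probEvent_union (disjoint_rectFin_column (by push_cast; omega)) p
      fun A₁ hA₁ A₂ hA₂ => noVerticalDoubleGap_and_not_columnOccupied_union_iff hA₁ hA₂,
    probEvent_not_nonempty, card_column, mul_comm]

theorem probEvent_crossedLeftRight_add_three (k : ℕ) :
    probEvent (rectFin (k + 3) n) p (CrossedLeftRight (k + 3) n) =
      (1 - (1 - p) ^ n) * probEvent (rectFin (k + 2) n) p (CrossedLeftRight (k + 2) n) +
        (1 - (1 - p) ^ n) * (1 - p) ^ n *
          probEvent (rectFin (k + 1) n) p (CrossedLeftRight (k + 1) n) := by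
  rw [probEvent_crossedLeftRight_succ, probEvent_noVerticalDoubleGap_add_two]
  ring

end Recursion

theorem le_mul_pow_of_linear_recurrence {x : ℕ → ℝ} {a c b B : ℝ} (ha : 0 ≤ a) (hc : 0 ≤ c)
    (hb : b ^ 2 = a * b + c) (h₀ : x 0 ≤ B) (h₁ : x 1 ≤ B * b)
    (hx : ∀ k, x (k + 2) = a * x (k + 1) + c * x k) (k : ℕ) : x k ≤ B * b ^ k := by
  induction k using Nat.twoStepInduction with
  | zero => simpa using h₀
  | one => simpa using h₁
  | more k ih₀ ih₁ =>
    calc x (k + 2) = a * x (k + 1) + c * x k := hx k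
      _ ≤ a * (B * b ^ (k + 1)) + c * (B * b ^ k) := by gcongr
      _ = B * b ^ k * (a * b + c) := by ring
      _ = B * b ^ (k + 2) := by rw [← hb]; ring

section Beta

variable {u : ℝ}

theorem betaFn_sq (hu : 0 ≤ u * (4 - 3 * u)) : betaFn u ^ 2 = u * betaFn u + u * (1 - u) := by
  rw [betaFn]
  linear_combination Real.sq_sqrt hu / 4

theorem le_betaFn (hu₀ : 0 ≤ u) (hu₁ : u ≤ 1) : u ≤ betaFn u := by
  have hs := Real.sq_sqrt (show 0 ≤ u * (4 - 3 * u) by nlinarith)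
  rw [betaFn]
  nlinarith [Real.sqrt_nonneg (u * (4 - 3 * u))]

theorem le_betaFn_sq (hu₀ : 0 ≤ u) (hu₁ : u ≤ 1) : u ≤ betaFn u ^ 2 := by
  rw [betaFn_sq (by nlinarith)]
  nlinarith [le_betaFn hu₀ hu₁]

end Beta

theorem exp_neg_mul_gFn (m : ℕ) {z : ℝ} (hβ : 0 < betaFn (1 - Real.exp (-z))) :
    Real.exp (-(m : ℝ) * gFn z) = betaFn (1 - Real.exp (-z)) ^ m := by
  rw [gFn, neg_mul_neg, Real.exp_nat_mul, Real.exp_log hβ]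

/-- Lemma 8 of Holroyd: the probability of being crossed from left to right is
at most `exp(−m·g(nq))`. -/
theorem prob_crossed_le (m n : ℕ) (hm : 1 ≤ m) (hn : 1 ≤ n)
    (p : ℝ) (hp0 : 0 < p) (hp1 : p < 1) :
    probEvent (rectFin m n) p (CrossedLeftRight m n) ≤
      Real.exp (-(m : ℝ) * gFn ((n : ℝ) * (-Real.log (1 - p)))) := by
  have hexp : Real.exp (-((n : ℝ) * (-Real.log (1 - p)))) = (1 - p) ^ n := by
    rw [mul_neg, neg_neg, Real.exp_nat_mul, Real.exp_log (by linarith)]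
  have he₀ : 0 ≤ (1 - p) ^ n := pow_nonneg (by linarith) n
  have hu₀ : 0 < 1 - (1 - p) ^ n := sub_pos.2 (pow_lt_one₀ (by linarith) (by linarith) (by omega))
  have hu₁ : 1 - (1 - p) ^ n ≤ 1 := sub_le_self _ he₀
  rw [exp_neg_mul_gFn m (by rw [hexp]; exact hu₀.trans_le (le_betaFn hu₀.le hu₁)), hexp]
  obtain ⟨k, rfl⟩ : ∃ k, m = k + 1 := ⟨m - 1, by omega⟩
  rw [pow_succ']
  refine le_mul_pow_of_linear_recurrence (x := fun k =>
      probEvent (rectFin (k + 1) n) p (CrossedLeftRight (k + 1) n))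
    hu₀.le (mul_nonneg hu₀.le he₀) ?_ ?_ ?_ (probEvent_crossedLeftRight_add_three n p) k
  · rw [betaFn_sq (by nlinarith)]
    ring
  · rw [probEvent_crossedLeftRight_succ, probEvent_noVerticalDoubleGap_of_le_one n p zero_le_one,
      mul_one]
    exact le_betaFn hu₀.le hu₁
  · rw [probEvent_crossedLeftRight_succ, probEvent_noVerticalDoubleGap_of_le_one n p le_rfl,
      mul_one, ← sq]
    exact le_betaFn_sq hu₀.le hu₁
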